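/- arXiv:2310.14089 — 2 statements merged into one kernel-verified Lean document; each statement's English description precedes it below -/
import Mathlib

section
/- For every real number A ≥ 0, the series ∑_{k=0}^∞ A^k k^{k/2}/k! converges and is bounded by C·exp(C·A²) for some absolute constant C > 0 (with the convention 0^0 = 1). -/
/-!
Squaring the `k`-th term and using `k ^ k ≤ e ^ k k!` gives
`(A ^ k k ^ (k/2) / k!) ^ 2 ≤ 2⁻ᵏ · (2eA²) ^ k / k!`, so by AM-GM each term is at most the mean of
`2⁻ᵏ` and `(2eA²) ^ k / k!`. Summing, the series is bounded by
`(2 + exp (2eA²)) / 2 ≤ 2e · exp (2eA²)`.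
-/

open Real Nat

lemma natCast_pow_self_le_exp_one_pow_mul_factorial (n : ℕ) :
    (n : ℝ) ^ n ≤ exp 1 ^ n * n ! := by
  rw [exp_one_pow]
  exact (div_le_iff₀ (by positivity)).1
    (Real.pow_div_factorial_le_exp (n : ℝ) (Nat.cast_nonneg n) n)

lemma le_add_div_two_of_sq_le_mul {t a b : ℝ} (ha : 0 ≤ a) (hb : 0 ≤ b) (h : t ^ 2 ≤ a * b) :
    t ≤ (a + b) / 2 := by
  nlinarith [sq_nonneg (a - b)]

lemma rpow_natCast_div_two_sq {x : ℝ} (hx : 0 ≤ x) (n : ℕ) : (x ^ ((n : ℝ) / 2)) ^ 2 = x ^ n := by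
  rw [← rpow_natCast _ 2, ← rpow_mul hx, ← rpow_natCast]
  norm_num

lemma pow_mul_rpow_half_div_factorial_sq_le (A : ℝ) (k : ℕ) :
    (A ^ k * (k : ℝ) ^ ((k : ℝ) / 2) / k !) ^ 2 ≤ (1 / 2) ^ k * ((2 * exp 1 * A ^ 2) ^ k / k !) := by
  rw [div_pow, mul_pow, rpow_natCast_div_two_sq (Nat.cast_nonneg k)]
  calc (A ^ k) ^ 2 * (k : ℝ) ^ k / (k ! : ℝ) ^ 2
      ≤ (A ^ k) ^ 2 * (exp 1 ^ k * k !) / (k ! : ℝ) ^ 2 := by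
        gcongr
        exact natCast_pow_self_le_exp_one_pow_mul_factorial k
    _ = (1 / 2) ^ k * ((2 * exp 1 * A ^ 2) ^ k / k !) := by
        field_simp
        rw [← mul_pow]
        ring

lemma pow_mul_rpow_half_div_factorial_le (A : ℝ) (k : ℕ) :
    A ^ k * (k : ℝ) ^ ((k : ℝ) / 2) / k ! ≤
      ((1 / 2) ^ k + (2 * exp 1 * A ^ 2) ^ k / k !) / 2 :=
  le_add_div_two_of_sq_le_mul (by positivity) (by positivity)
    (pow_mul_rpow_half_div_factorial_sq_le A k)

lemma summable_pow_mul_rpow_half_div_factorial_and_tsum_le {A : ℝ} (hA : 0 ≤ A) :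
    Summable (fun k : ℕ => A ^ k * (k : ℝ) ^ ((k : ℝ) / 2) / k !) ∧
      ∑' k : ℕ, A ^ k * (k : ℝ) ^ ((k : ℝ) / 2) / k ! ≤ (2 + exp (2 * exp 1 * A ^ 2)) / 2 := by
  have hmajorant : HasSum (fun k : ℕ => ((1 / 2) ^ k + (2 * exp 1 * A ^ 2) ^ k / k !) / 2)
      ((2 + exp (2 * exp 1 * A ^ 2)) / 2) := by
    rw [exp_eq_exp_ℝ]
    exact (hasSum_geometric_two.add (NormedSpace.expSeries_div_hasSum_exp _)).div_const 2
  have hnonneg (k : ℕ) : 0 ≤ A ^ k * (k : ℝ) ^ ((k : ℝ) / 2) / k ! := by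
    have := rpow_nonneg (Nat.cast_nonneg k) ((k : ℝ) / 2)
    positivity
  have hsummable :=
    hmajorant.summable.of_nonneg_of_le hnonneg (pow_mul_rpow_half_div_factorial_le A)
  exact ⟨hsummable, hasSum_le (pow_mul_rpow_half_div_factorial_le A) hsummable.hasSum hmajorant⟩

/-- For every real `A ≥ 0`, the series `∑ A^k k^(k/2)/k!` converges and is bounded by
`C·exp(C·A²)` for an absolute constant `C > 0` (with `0^0 = 1` via `rpow`). -/
theorem stmt0 :
    ∃ C : ℝ, 0 < C ∧ ∀ A : ℝ, 0 ≤ A →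
      Summable (fun k : ℕ => A ^ k * (k : ℝ) ^ ((k : ℝ) / 2) / (Nat.factorial k : ℝ)) ∧
      (∑' k : ℕ, A ^ k * (k : ℝ) ^ ((k : ℝ) / 2) / (Nat.factorial k : ℝ))
        ≤ C * Real.exp (C * A ^ 2) := by
  refine ⟨2 * exp 1, by positivity, fun A hA => ?_⟩
  obtain ⟨hsummable, hle⟩ := summable_pow_mul_rpow_half_div_factorial_and_tsum_le hA
  refine ⟨hsummable, hle.trans ?_⟩
  have hexp : 1 ≤ exp (2 * exp 1 * A ^ 2) := one_le_exp (by positivity)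
  have he : 1 ≤ exp 1 := one_le_exp zero_le_one
  nlinarith
end

section
/- Let u : ℝ^{n−1} × (0,∞) → ℝ be C¹ up to the boundary and bounded with bounded derivatives, and for ε > 0 define Eu(x', x_n) for x_n < 0 by Eu(x', x_n) = −ε·u(x', −(3/(2ε))x_n) + (1+ε)·u(x', −(1/(2(1+ε)))x_n), and Eu = u for x_n ≥ 0. Then Eu is continuous across x_n = 0, its distributional first derivatives agree with the classical ones on each half-space and have no singular part on {x_n = 0}, and ‖Eu‖_{L^∞(ℝⁿ)} ≤ (1 + 2ε)‖u‖_{L^∞}. -/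
/-!
The two coefficients `-ε` and `1 + ε` sum to `1`, so the reflection agrees with `u` on the
hyperplane and the glued function is continuous; the rescalings `-3/(2ε)` and `-1/(2(1+ε))` are
chosen so that `-ε · (-3/(2ε)) + (1+ε) · (-1/(2(1+ε))) = 1`, so the one-sided normal derivatives
also agree. Since `|-ε| + |1 + ε| = 1 + 2ε`, the triangle inequality gives the sup bound.
-/

open Filter Topology

section Gluing

variable {E F : Type*} [NormedAddCommGroup E] [NormedSpace ℝ E]
  [NormedAddCommGroup F] [NormedSpace ℝ F]

theorem differentiableAt_ite_snd_nonneg {f g : E × ℝ → F} {x : E × ℝ} (hx : x.2 ≠ 0)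
    (hf : DifferentiableAt ℝ f x) (hg : DifferentiableAt ℝ g x) :
    DifferentiableAt ℝ (fun y => if 0 ≤ y.2 then f y else g y) x := by
  rcases hx.lt_or_gt with hneg | hpos
  · refine hg.congr_of_eventuallyEq ?_
    filter_upwards [(isOpen_lt continuous_snd continuous_const).mem_nhds hneg] with y hy
    exact if_neg (not_le.mpr hy)
  · refine hf.congr_of_eventuallyEq ?_
    filter_upwards [(isOpen_lt continuous_const continuous_snd).mem_nhds hpos] with y hy
    exact if_pos hy.le

theorem HasDerivAt.ite_nonneg {f g : ℝ → F} {f' : F} (hf : HasDerivAt f f' 0)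
    (hg : HasDerivAt g f' 0) (hfg : f 0 = g 0) :
    HasDerivAt (fun t => if 0 ≤ t then f t else g t) f' 0 := by
  have hIci : HasDerivWithinAt (fun t => if 0 ≤ t then f t else g t) f' (Set.Ici 0) 0 :=
    hf.hasDerivWithinAt.congr (fun t ht => if_pos ht) (if_pos le_rfl)
  have hIic : HasDerivWithinAt (fun t => if 0 ≤ t then f t else g t) f' (Set.Iic 0) 0 := by
    refine hg.hasDerivWithinAt.congr (fun t ht => ?_) (by simp [hfg])
    rcases (Set.mem_Iic.mp ht).lt_or_eq with hneg | rfl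
    · exact if_neg (not_le.mpr hneg)
    · simp [hfg]
  simpa [Set.Iic_union_Ici] using hIic.union hIci

end Gluing

section TwoPointReflection

variable {E : Type*}

def twoPointReflection (α β a b : ℝ) (u : E × ℝ → ℝ) (x : E × ℝ) : ℝ :=
  α * u (x.1, a * x.2) + β * u (x.1, b * x.2)

variable {α β a b : ℝ} {u : E × ℝ → ℝ}

theorem twoPointReflection_snd_eq_zero (hαβ : α + β = 1) (x : E × ℝ) (hx : x.2 = 0) :
    twoPointReflection α β a b u x = u x := by
  obtain ⟨x', t⟩ := x
  subst hx
  simp only [twoPointReflection, mul_zero, ← add_mul, hαβ, one_mul]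

theorem hasDerivAt_twoPointReflection_snd (x' : E)
    (hu : DifferentiableAt ℝ (fun t => u (x', t)) 0) (hαβ : α * a + β * b = 1) :
    HasDerivAt (fun t => twoPointReflection α β a b u (x', t))
      (deriv (fun t => u (x', t)) 0) 0 := by
  set D := deriv (fun t => u (x', t)) 0
  have hscaled (c : ℝ) : HasDerivAt (fun t => u (x', c * t)) (c * D) 0 :=
    hu.hasDerivAt.scomp_of_eq 0 (hasDerivAt_const_mul c) (mul_zero c).symm
  have hsum := ((hscaled a).const_mul α).add ((hscaled b).const_mul β)
  rwa [show α * (a * D) + β * (b * D) = D by linear_combination D * hαβ] at hsum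

theorem Differentiable.twoPointReflection [NormedAddCommGroup E] [NormedSpace ℝ E]
    (hu : Differentiable ℝ u) :
    Differentiable ℝ (twoPointReflection α β a b u) := by
  have hscale : ∀ c : ℝ, Differentiable ℝ (fun x : E × ℝ => (x.1, c * x.2)) := fun c =>
    differentiable_fst.prodMk (differentiable_snd.const_mul c)
  exact ((hu.comp (hscale a)).const_mul α).add ((hu.comp (hscale b)).const_mul β)

theorem abs_twoPointReflection_le {C : ℝ} (hu : ∀ x, |u x| ≤ C) (x : E × ℝ) :
    |twoPointReflection α β a b u x| ≤ (|α| + |β|) * C :=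
  calc |twoPointReflection α β a b u x|
      ≤ |α| * |u (x.1, a * x.2)| + |β| * |u (x.1, b * x.2)| := by
        simpa only [twoPointReflection, abs_mul] using
          abs_add_le (α * u (x.1, a * x.2)) (β * u (x.1, b * x.2))
    _ ≤ |α| * C + |β| * C := add_le_add (mul_le_mul_of_nonneg_left (hu _) (abs_nonneg α))
        (mul_le_mul_of_nonneg_left (hu _) (abs_nonneg β))
    _ = (|α| + |β|) * C := by ring

end TwoPointReflection

/-- Modified first-order extension across the hyperplane `{x_n = 0}`: if `u` is `C¹` and
bounded by `Cb`, and `Eu` is defined by the two-point reflection formula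
`Eu(x', x_n) = −ε·u(x', −(3/(2ε))x_n) + (1+ε)·u(x', −(1/(2(1+ε)))x_n)` for `x_n < 0` and
`Eu = u` for `x_n ≥ 0`, then `Eu` is continuous across the hyperplane, differentiable off it
(and the normal derivative matches across it, so the distributional derivative has no singular
part), and `‖Eu‖_∞ ≤ (1+2ε)·Cb`. -/
theorem stmt16 (n : ℕ) (ε Cb : ℝ) (hε : 0 < ε)
    (u : ((Fin n → ℝ) × ℝ) → ℝ) (hu : ContDiff ℝ 1 u) (hub : ∀ x, |u x| ≤ Cb)
    (Eu : ((Fin n → ℝ) × ℝ) → ℝ)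
    (hEu : ∀ x : (Fin n → ℝ) × ℝ, Eu x =
      if 0 ≤ x.2 then u x
      else -ε * u (x.1, -(3 / (2 * ε)) * x.2) + (1 + ε) * u (x.1, -(1 / (2 * (1 + ε))) * x.2)) :
    Continuous Eu ∧
    (∀ x : (Fin n → ℝ) × ℝ, x.2 ≠ 0 → DifferentiableAt ℝ Eu x) ∧
    (∀ x' : Fin n → ℝ,
      HasDerivAt (fun t : ℝ => Eu (x', t)) (deriv (fun t : ℝ => u (x', t)) 0) 0) ∧
    (∀ x : (Fin n → ℝ) × ℝ, |Eu x| ≤ (1 + 2 * ε) * Cb) := by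
  set v := twoPointReflection (-ε) (1 + ε) (-(3 / (2 * ε))) (-(1 / (2 * (1 + ε)))) u
  have hEu' : Eu = fun x => if 0 ≤ x.2 then u x else v x := funext hEu
  have hDu : Differentiable ℝ u := hu.differentiable one_ne_zero
  have hsum : -ε + (1 + ε) = 1 := by ring
  have hslope : -ε * -(3 / (2 * ε)) + (1 + ε) * -(1 / (2 * (1 + ε))) = 1 := by
    field_simp
    ring
  have hCb : 0 ≤ Cb := (abs_nonneg _).trans (hub 0)
  subst hEu'
  refine ⟨?_, fun x hx => differentiableAt_ite_snd_nonneg hx (hDu x) (hDu.twoPointReflection x),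
    fun x' => ?_, fun x => ?_⟩
  · exact Continuous.if_le hDu.continuous hDu.twoPointReflection.continuous continuous_const
      continuous_snd fun x hx => (twoPointReflection_snd_eq_zero hsum x hx.symm).symm
  · have hslice : DifferentiableAt ℝ (fun t => u (x', t)) 0 :=
      (hDu.comp (by fun_prop)).differentiableAt
    exact HasDerivAt.ite_nonneg hslice.hasDerivAt
      (hasDerivAt_twoPointReflection_snd x' hslice hslope)
      (twoPointReflection_snd_eq_zero hsum (x', 0) rfl).symm
  · dsimp only
    split_ifs
    · exact (hub x).trans (le_mul_of_one_le_left hCb (by linarith))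
    · calc |v x| ≤ (|-ε| + |1 + ε|) * Cb := abs_twoPointReflection_le hub x
        _ = (1 + 2 * ε) * Cb := by
          rw [abs_neg, abs_of_pos hε, abs_of_pos (by linarith)]
          ring
end
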